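/- Let n ≥ 2, χ > 0, p, q ≥ 1 with p ≤ q, m > 0, λ ∈ [1/3,1], K > 0 with K ≥ √(b_λ Rⁿ), and let B₀ ∈ (0,1) satisfy K√B₀ ≤ Rⁿ, B₀ ≤ K²/(4(a_λ + b_λ)²), B₀ < 2λn A_T/(e^d μ), and B₀^{2−2/n} ≤ (2λ A_T/e^d − (μ/n)B₀)², where μ := mn/(ω_n Rⁿ). If for some T > 0 the function B ∈ C¹([0,T)) is positive and nonincreasing with B(0) ≤ B₀ and B′(t) ≥ −(n^q χ/√2)·(2λ A_T/e^d)^{q−1}·B(t)^{1−1/n} for all t ∈ (0,T), then (𝒫 w_in)(s,t) ≤ 0 for all t ∈ (0,T) and all s ∈ (0,B(t)). -/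

import Mathlib

open Real Set

/-- `a_λ := (1-λ)²/(2λ)`. -/
noncomputable def aL (l : ℝ) : ℝ := (1 - l) ^ 2 / (2 * l)

/-- `b_λ := (3λ-1)/(2λ)`. -/
noncomputable def bL (l : ℝ) : ℝ := (3 * l - 1) / (2 * l)

/-- `ω_n`, the `(n-1)`-dimensional measure of the unit sphere in `ℝⁿ`,
equals `n` times the volume of the unit ball. -/
noncomputable def omegaN (n : ℕ) : ℝ :=
  (n : ℝ) * (MeasureTheory.volume (Metric.ball (0 : EuclideanSpace ℝ (Fin n)) 1)).toReal

/-- The comparison profile `φ`. -/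
noncomputable def phi (l d ξ : ℝ) : ℝ :=
  if ξ < 1 then (2 * l / (d * Real.exp d)) * (Real.exp (d * ξ) - 1)
  else 1 - aL l / (ξ - bL l)

/-- The derivative `φ'`. -/
noncomputable def phiD (l d ξ : ℝ) : ℝ :=
  if ξ < 1 then 2 * l * Real.exp (d * (ξ - 1)) else aL l / (ξ - bL l) ^ 2

/-- The second derivative `φ''`. -/
noncomputable def phiDD (l d ξ : ℝ) : ℝ :=
  if ξ < 1 then 2 * d * l * Real.exp (d * (ξ - 1)) else -2 * aL l / (ξ - bL l) ^ 3

/-- `N(t)`. -/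
noncomputable def Nf (l R K : ℝ) (n : ℕ) (B : ℝ → ℝ) (t : ℝ) : ℝ :=
  K ^ 2 + aL l * R ^ n - (aL l + bL l) * (2 * K * Real.sqrt (B t) - bL l * B t)

/-- `A(t)`. -/
noncomputable def Af (m ωn l R K : ℝ) (n : ℕ) (B : ℝ → ℝ) (t : ℝ) : ℝ :=
  (m / ωn) * (K ^ 2 - 2 * bL l * K * Real.sqrt (B t) + (bL l) ^ 2 * B t) / Nf l R K n B t

/-- `D(t)`. -/
noncomputable def Df (m ωn l R K : ℝ) (n : ℕ) (B : ℝ → ℝ) (t : ℝ) : ℝ :=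
  (m / ωn) * aL l / Nf l R K n B t

/-- `E(t) := m/ω_n - Rⁿ D(t)`. -/
noncomputable def Ef (m ωn l R K : ℝ) (n : ℕ) (B : ℝ → ℝ) (t : ℝ) : ℝ :=
  m / ωn - R ^ n * Df m ωn l R K n B t

/-- `A_T := (m/ω_n)·1/(1 + a_λ Rⁿ/K²)`. -/
noncomputable def AT (m ωn l R K : ℝ) (n : ℕ) : ℝ :=
  (m / ωn) * (1 / (1 + aL l * R ^ n / K ^ 2))

/-- The parabolic operator `𝒫`. -/
noncomputable def Pop (n : ℕ) (χ p q μ : ℝ) (w : ℝ → ℝ → ℝ) (s t : ℝ) : ℝ :=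
  deriv (fun τ => w s τ) t
    - (n : ℝ) ^ (p + 1) * (s ^ (2 - 2 / (n : ℝ)) * (deriv (fun σ => w σ t) s) ^ p
        * deriv (deriv (fun σ => w σ t)) s)
      / Real.sqrt ((deriv (fun σ => w σ t) s) ^ 2
        + (n : ℝ) ^ 2 * s ^ (2 - 2 / (n : ℝ)) * (deriv (deriv (fun σ => w σ t)) s) ^ 2)
    - (n : ℝ) ^ q * χ * ((w s t - (μ / (n : ℝ)) * s) * (deriv (fun σ => w σ t) s) ^ q)
      / Real.sqrt (1 + s ^ (2 / (n : ℝ) - 2) * (w s t - (μ / (n : ℝ)) * s) ^ 2)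

/-- `J₁(s,t)`. -/
noncomputable def J1 (n : ℕ) (p m ωn l R K d : ℝ) (B : ℝ → ℝ) (s t : ℝ) : ℝ :=
  -(n : ℝ) ^ (p + 1) * ((s / B t) ^ (2 - 2 / (n : ℝ)) * phiDD l d (s / B t))
    / Real.sqrt ((B t) ^ (4 / (n : ℝ) - 2) * (phiD l d (s / B t)) ^ 2
        + (n : ℝ) ^ 2 * (B t) ^ (2 / (n : ℝ) - 2) * (s / B t) ^ (2 - 2 / (n : ℝ))
          * (phiDD l d (s / B t)) ^ 2)
    * (Af m ωn l R K n B t * phiD l d (s / B t) / B t) ^ (p - 1)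

/-- `J₂(s,t)`. -/
noncomputable def J2 (n : ℕ) (q χ m ωn l R K d μ : ℝ) (B : ℝ → ℝ) (s t : ℝ) : ℝ :=
  -(n : ℝ) ^ q * χ
      * (Af m ωn l R K n B t * phi l d (s / B t) - (μ / (n : ℝ)) * B t * (s / B t))
    / Real.sqrt (1 + (B t) ^ (2 / (n : ℝ) - 2) * (s / B t) ^ (2 / (n : ℝ) - 2)
        * (Af m ωn l R K n B t * phi l d (s / B t) - (μ / (n : ℝ)) * B t * (s / B t)) ^ 2)
    * (Af m ωn l R K n B t * phiD l d (s / B t) / B t) ^ (q - 1)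

/-! In the very inner region `ξ = s/B(t) < 1` the profile is `φ(ξ) = 2λ(e^{dξ} - 1)/(d e^d)`, so
`w_s, w_ss > 0` and the diffusion part of `𝒫 w_in` is nonpositive. The coefficient `A` is an
increasing function of `B` with `A ≥ A_T`, and `B` decreases, so `w_t ≤ w_s · ξ · (-B')`. The
lower bound on `B'` then has to be beaten by the chemotactic part: `w_s ≥ 2λA_T/e^d`, the
smallness of `B₀` gives `Y := w - (μ/n)s ≥ ξ B^{1-1/n}`, and
`Y/√(1 + (Y/u)²) ≥ min(Y, u)/√2` for `u = s^{1-1/n} ≥ ξ B^{1-1/n}`. -/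

open Filter Topology

lemma aL_nonneg {l : ℝ} (hl : 0 < l) : 0 ≤ aL l := by unfold aL; positivity

lemma bL_nonneg {l : ℝ} (hl : 1 / 3 ≤ l) : 0 ≤ bL l := by
  unfold bL; exact div_nonneg (by linarith) (by linarith)

lemma aL_add_bL {l : ℝ} (hl : 0 < l) : aL l + bL l = (1 + l) / 2 := by
  unfold aL bL; field_simp; ring

lemma aL_pos_or_bL_pos {l : ℝ} (hl : l ∈ Icc (1 / 3 : ℝ) 1) : 0 < aL l ∨ 0 < bL l := by
  rcases hl.2.lt_or_eq with h | rfl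
  · left; unfold aL; exact div_pos (pow_pos (by linarith) 2) (by linarith [hl.1])
  · right; norm_num [bL]

lemma two_mul_aL_add_bL_mul_sqrt_le {l K b : ℝ} (hl : 0 < l) (hK : 0 < K)
    (hb : b ≤ K ^ 2 / (4 * (aL l + bL l) ^ 2)) : 2 * (aL l + bL l) * √b ≤ K := by
  have hab : 0 < 2 * (aL l + bL l) := by rw [aL_add_bL hl]; linarith
  rw [← le_div_iff₀' hab, sqrt_le_left (by positivity)]
  rwa [div_pow, mul_pow, show (2 : ℝ) ^ 2 = 4 by norm_num]

lemma omegaN_pos {n : ℕ} (hn : 0 < n) : 0 < omegaN n :=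
  mul_pos (Nat.cast_pos.2 hn) <| ENNReal.toReal_pos (Metric.measure_ball_pos _ _ one_pos).ne'
    MeasureTheory.measure_ball_lt_top.ne

lemma HasDerivAt.nonpos_of_antitoneOn_of_mem_nhds {g : ℝ → ℝ} {g' x : ℝ} {s : Set ℝ}
    (hd : HasDerivAt g g' x) (hg : AntitoneOn g s) (hs : s ∈ 𝓝 x) : g' ≤ 0 :=
  hd.hasDerivWithinAt.nonpos_of_antitoneOn
    (accPt_iff_frequently_nhdsNE.2 (Eventually.frequently (mem_nhdsWithin_of_mem_nhds hs))) hg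

section Profile

variable {l d ξ : ℝ}

lemma phi_of_lt_one (hξ : ξ < 1) :
    phi l d ξ = 2 * l / (d * exp d) * (exp (d * ξ) - 1) := if_pos hξ

lemma phiD_of_lt_one (hξ : ξ < 1) : phiD l d ξ = 2 * l * exp (d * (ξ - 1)) := if_pos hξ

lemma phiDD_of_lt_one (hξ : ξ < 1) : phiDD l d ξ = 2 * d * l * exp (d * (ξ - 1)) := if_pos hξ

lemma hasDerivAt_phi (hd : d ≠ 0) (hξ : ξ < 1) : HasDerivAt (phi l d) (phiD l d ξ) ξ := by
  have h := (((hasDerivAt_id ξ).const_mul d).exp.sub_const 1).const_mul (2 * l / (d * exp d))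
  refine (h.congr_of_eventuallyEq ?_).congr_deriv ?_
  · filter_upwards [Iio_mem_nhds hξ] with x hx using phi_of_lt_one hx
  · rw [phiD_of_lt_one hξ, mul_sub, mul_one, exp_sub]; field_simp; simp

lemma hasDerivAt_phiD (hξ : ξ < 1) : HasDerivAt (phiD l d) (phiDD l d ξ) ξ := by
  have h := ((((hasDerivAt_id ξ).sub_const 1).const_mul d).exp).const_mul (2 * l)
  refine (h.congr_of_eventuallyEq ?_).congr_deriv ?_
  · filter_upwards [Iio_mem_nhds hξ] with x hx using phiD_of_lt_one hx
  · rw [phiDD_of_lt_one hξ]; simp only [id_eq, mul_one]; ring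

lemma phiD_pos (hl : 0 < l) (hξ : ξ < 1) : 0 < phiD l d ξ := by
  rw [phiD_of_lt_one hξ]; positivity

lemma phiDD_pos (hl : 0 < l) (hd : 0 < d) (hξ : ξ < 1) : 0 < phiDD l d ξ := by
  rw [phiDD_of_lt_one hξ]; positivity

lemma two_mul_exp_neg_le_phiD (hl : 0 ≤ l) (hd : 0 ≤ d) (hξ₀ : 0 ≤ ξ) (hξ : ξ < 1) :
    2 * l * exp (-d) ≤ phiD l d ξ := by
  rw [phiD_of_lt_one hξ]
  gcongr
  nlinarith

lemma le_phi (hl : 0 ≤ l) (hd : 0 < d) (hξ : ξ < 1) : 2 * l / exp d * ξ ≤ phi l d ξ := by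
  rw [phi_of_lt_one hξ]
  calc 2 * l / exp d * ξ = 2 * l / (d * exp d) * (d * ξ) := by field_simp
    _ ≤ 2 * l / (d * exp d) * (exp (d * ξ) - 1) := by
      gcongr; linarith [add_one_le_exp (d * ξ)]

variable {b c x : ℝ}

lemma hasDerivAt_mul_phi_div (hd : d ≠ 0) (hb : 0 < b) (hx : x < b) :
    HasDerivAt (fun σ => c * phi l d (σ / b)) (c * phiD l d (x / b) / b) x := by
  have h := (hasDerivAt_phi (l := l) hd ((div_lt_one hb).2 hx)).comp x
    ((hasDerivAt_id x).div_const b)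
  exact (h.const_mul c).congr_deriv (by simp [div_eq_mul_inv, mul_assoc])

lemma deriv_mul_phi_div (hd : d ≠ 0) (hb : 0 < b) (hx : x < b) :
    deriv (fun σ => c * phi l d (σ / b)) x = c * phiD l d (x / b) / b :=
  (hasDerivAt_mul_phi_div hd hb hx).deriv

lemma deriv_deriv_mul_phi_div (hd : d ≠ 0) (hb : 0 < b) (hx : x < b) :
    deriv (deriv fun σ => c * phi l d (σ / b)) x = c * phiDD l d (x / b) / b ^ 2 := by
  have heq : deriv (fun σ => c * phi l d (σ / b)) =ᶠ[𝓝 x] fun σ => c * phiD l d (σ / b) / b := by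
    filter_upwards [Iio_mem_nhds hx] with σ hσ using deriv_mul_phi_div hd hb hσ
  rw [heq.deriv_eq]
  have h := (hasDerivAt_phiD (l := l) (d := d) ((div_lt_one hb).2 hx)).comp x
    ((hasDerivAt_id x).div_const b)
  exact ((h.const_mul c).div_const b).deriv.trans (by simp only [one_div]; ring)

end Profile

section Coefficient

variable {m ωn l R K : ℝ} {n : ℕ} {B : ℝ → ℝ} {t : ℝ}

lemma Nf_pos (hl : l ∈ Icc (1 / 3 : ℝ) 1) (hR : 0 < R) (hK : 0 < K) (hBt : 0 < B t)
    (hsmall : 2 * (aL l + bL l) * √(B t) ≤ K) : 0 < Nf l R K n B t := by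
  have hl₀ : 0 < l := by linarith [hl.1]
  have ha := aL_nonneg hl₀
  have hb := bL_nonneg hl.1
  have hlin : (aL l + bL l) * (2 * K * √(B t)) ≤ K ^ 2 := by nlinarith
  have hrest : 0 < aL l * R ^ n + (aL l + bL l) * bL l * B t := by
    rcases aL_pos_or_bL_pos hl with h | h <;> positivity
  unfold Nf; nlinarith

lemma Af_num_eq (hBt : 0 ≤ B t) :
    K ^ 2 - 2 * bL l * K * √(B t) + bL l ^ 2 * B t = (K - bL l * √(B t)) ^ 2 := by
  nth_rw 2 [← sq_sqrt hBt]; ring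

lemma Af_pos (hl : l ∈ Icc (1 / 3 : ℝ) 1) (hm : 0 < m) (hω : 0 < ωn) (hR : 0 < R) (hK : 0 < K)
    (hBt : 0 < B t) (hsmall : 2 * (aL l + bL l) * √(B t) ≤ K) : 0 < Af m ωn l R K n B t := by
  have hb := bL_nonneg hl.1
  have hby : bL l * √(B t) < K := by
    nlinarith [aL_nonneg (by linarith [hl.1] : 0 < l), sqrt_nonneg (B t)]
  unfold Af
  rw [Af_num_eq hBt.le]
  have := Nf_pos (n := n) hl hR hK hBt hsmall
  have : 0 < K - bL l * √(B t) := by linarith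
  positivity

lemma AT_pos (hl : 0 < l) (hm : 0 < m) (hω : 0 < ωn) (hR : 0 < R) :
    0 < AT m ωn l R K n := by
  have := aL_nonneg hl
  unfold AT; positivity

lemma AT_le_Af (hl : l ∈ Icc (1 / 3 : ℝ) 1) (hm : 0 < m) (hω : 0 < ωn) (hR : 0 < R)
    (hK : 0 < K) (hKb : bL l * R ^ n ≤ K ^ 2) (hBt : 0 < B t)
    (hsmall : 2 * (aL l + bL l) * √(B t) ≤ K) : AT m ωn l R K n ≤ Af m ωn l R K n B t := by
  have hl₀ : 0 < l := by linarith [hl.1]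
  have ha := aL_nonneg hl₀
  have hb := bL_nonneg hl.1
  have hN := Nf_pos (n := n) hl hR hK hBt hsmall
  have hkey : m / ωn * (K ^ 2 - 2 * bL l * K * √(B t) + bL l ^ 2 * B t) * (K ^ 2 + aL l * R ^ n)
      - m / ωn * K ^ 2 * Nf l R K n B t
      = m / ωn * (aL l * (K ^ 2 - bL l * R ^ n) * (√(B t) * (2 * K - bL l * √(B t)))) := by
    unfold Nf
    have hBy := sq_sqrt hBt.le
    generalize √(B t) = y at hBy ⊢
    rw [← hBy]; ring
  have hAT : AT m ωn l R K n = m / ωn * K ^ 2 / (K ^ 2 + aL l * R ^ n) := by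
    unfold AT; field_simp
  have : 0 ≤ m / ωn * (aL l * (K ^ 2 - bL l * R ^ n) * (√(B t) * (2 * K - bL l * √(B t)))) := by
    have : 0 ≤ K ^ 2 - bL l * R ^ n := by linarith
    have : 0 ≤ 2 * K - bL l * √(B t) := by nlinarith [sqrt_nonneg (B t)]
    positivity
  rw [hAT, Af, div_le_div_iff₀ (by positivity) hN]
  linarith

/-- `dA/dB` at `B t`; the quotient rule collapses to this through the identity
`(a + b)(K - b√B)² - b N = a (K² - b Rⁿ)`. -/
noncomputable def dAfdB (m ωn l R K : ℝ) (n : ℕ) (B : ℝ → ℝ) (t : ℝ) : ℝ :=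
  m / ωn * aL l * (K ^ 2 - bL l * R ^ n) * (K - bL l * √(B t))
    / (√(B t) * Nf l R K n B t ^ 2)

lemma hasDerivAt_Af {B' : ℝ} (hB : HasDerivAt B B' t) (hBt : 0 < B t)
    (hN : Nf l R K n B t ≠ 0) :
    HasDerivAt (fun τ => Af m ωn l R K n B τ) (dAfdB m ωn l R K n B t * B') t := by
  have hy := hB.sqrt hBt.ne'
  have hnum : HasDerivAt (fun τ => m / ωn * (K ^ 2 - 2 * bL l * K * √(B τ) + bL l ^ 2 * B τ))
      (m / ωn * (0 - 2 * bL l * K * (B' / (2 * √(B t))) + bL l ^ 2 * B')) t :=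
    (((hasDerivAt_const t (K ^ 2)).sub (hy.const_mul (2 * bL l * K))).add
      (hB.const_mul (bL l ^ 2))).const_mul (m / ωn)
  have hden : HasDerivAt
      (fun τ => K ^ 2 + aL l * R ^ n - (aL l + bL l) * (2 * K * √(B τ) - bL l * B τ))
      (0 - (aL l + bL l) * (2 * K * (B' / (2 * √(B t))) - bL l * B')) t :=
    (hasDerivAt_const t (K ^ 2 + aL l * R ^ n)).sub
      (((hy.const_mul (2 * K)).sub (hB.const_mul (bL l))).const_mul (aL l + bL l))
  refine (hnum.div hden hN).congr_deriv ?_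
  have hy0 : √(B t) ≠ 0 := (sqrt_pos.2 hBt).ne'
  unfold dAfdB
  unfold Nf at hN ⊢
  have hBy := sq_sqrt hBt.le
  generalize √(B t) = y at hBy hy0 hN ⊢
  rw [← hBy] at hN ⊢
  field_simp
  ring

lemma dAfdB_nonneg (hl : l ∈ Icc (1 / 3 : ℝ) 1) (hm : 0 < m) (hω : 0 < ωn)
    (hKb : bL l * R ^ n ≤ K ^ 2) (hBt : 0 < B t) (hsmall : 2 * (aL l + bL l) * √(B t) ≤ K) :
    0 ≤ dAfdB m ωn l R K n B t := by
  have ha := aL_nonneg (by linarith [hl.1] : 0 < l)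
  have : 0 ≤ K ^ 2 - bL l * R ^ n := by linarith
  have : 0 ≤ K - bL l * √(B t) := by nlinarith [bL_nonneg hl.1, sqrt_nonneg (B t)]
  unfold dAfdB
  positivity

end Coefficient

lemma hasDerivAt_Af_mul_phi {m ωn l R K d s t B' : ℝ} {n : ℕ} {B : ℝ → ℝ} (hd : d ≠ 0)
    (hB : HasDerivAt B B' t) (hs : s < B t) (hBt : 0 < B t) (hN : Nf l R K n B t ≠ 0) :
    HasDerivAt (fun τ => Af m ωn l R K n B τ * phi l d (s / B τ))
      (dAfdB m ωn l R K n B t * B' * phi l d (s / B t)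
        + Af m ωn l R K n B t * phiD l d (s / B t) / B t * (s / B t) * -B') t := by
  have hξ := (hasDerivAt_phi (l := l) hd ((div_lt_one hBt).2 hs)).comp t
    ((hasDerivAt_const t s).div hB hBt.ne')
  refine ((hasDerivAt_Af hB hBt hN).mul hξ).congr_deriv ?_
  simp only [Function.comp_apply, Pi.div_apply]
  field_simp
  ring

lemma min_div_sqrt_two_le {Y u : ℝ} (hY : 0 ≤ Y) (hu : 0 < u) :
    min Y u / √2 ≤ Y / √(1 + (Y / u) ^ 2) := by
  rcases le_total Y u with h | h
  · rw [min_eq_left h]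
    gcongr
    have : Y / u ≤ 1 := (div_le_one hu).2 h
    nlinarith [div_nonneg hY hu.le]
  · rw [min_eq_right h, div_le_div_iff₀ (by positivity) (by positivity)]
    have h1 : u * √(1 + (Y / u) ^ 2) = √(u ^ 2 + Y ^ 2) := by
      rw [← sqrt_sq hu.le, ← sqrt_mul (sq_nonneg u), sqrt_sq hu.le]
      congr 1; field_simp
    have h2 : √(u ^ 2 + Y ^ 2) ≤ √(Y ^ 2 * 2) := by gcongr; nlinarith
    rw [h1]; rw [sqrt_mul (sq_nonneg Y), sqrt_sq hY] at h2; linarith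

lemma rpow_neg_two_mul_mul_sq {s : ℝ} (hs : 0 < s) (α Y : ℝ) :
    s ^ (-2 * α) * Y ^ 2 = (Y / s ^ α) ^ 2 := by
  rw [div_pow, ← rpow_natCast (s ^ α), ← rpow_mul hs.le, neg_mul, rpow_neg hs.le]
  push_cast
  ring_nf

lemma mul_le_div_sqrt_one_add {k P G B ξ s Y α q D : ℝ} (hk : 0 ≤ k) (hG : 0 < G) (hGP : G ≤ P)
    (hq : 1 ≤ q) (hξ₀ : 0 < ξ) (hξ₁ : ξ ≤ 1) (hB : 0 < B) (hα₁ : α ≤ 1)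
    (hs : ξ * B = s) (hY : ξ * B ^ α ≤ Y) (hD : D ≤ k / √2 * G ^ (q - 1) * B ^ α) :
    P * ξ * D ≤ k * (Y * P ^ q) / √(1 + s ^ (-2 * α) * Y ^ 2) := by
  subst hs
  have hP : 0 < P := hG.trans_le hGP
  have hs : 0 < ξ * B := mul_pos hξ₀ hB
  have hPq : P * G ^ (q - 1) ≤ P ^ q := by
    calc P * G ^ (q - 1) ≤ P * P ^ (q - 1) := by gcongr
      _ = P ^ q := by rw [rpow_sub_one hP.ne', mul_div_cancel₀ _ hP.ne']
  have hξα : ξ ≤ ξ ^ α := by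
    simpa using rpow_le_rpow_of_exponent_ge hξ₀ hξ₁ hα₁
  have hmin : ξ * B ^ α ≤ min Y ((ξ * B) ^ α) :=
    le_min hY (by rw [mul_rpow hξ₀.le hB.le]; gcongr)
  have hY₀ : 0 ≤ Y := le_trans (by positivity) hY
  calc P * ξ * D ≤ P * ξ * (k / √2 * G ^ (q - 1) * B ^ α) := by gcongr
    _ = k * (P * G ^ (q - 1)) * (ξ * B ^ α) / √2 := by ring
    _ ≤ k * P ^ q * min Y ((ξ * B) ^ α) / √2 := by gcongr
    _ = k * P ^ q * (min Y ((ξ * B) ^ α) / √2) := by ring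
    _ ≤ k * P ^ q * (Y / √(1 + (Y / (ξ * B) ^ α) ^ 2)) := by
      gcongr k * P ^ q * ?_; exact min_div_sqrt_two_le hY₀ (rpow_pos_of_pos hs α)
    _ = k * (Y * P ^ q) / √(1 + (ξ * B) ^ (-2 * α) * Y ^ 2) := by
      rw [rpow_neg_two_mul_mul_sq hs]; ring

lemma rpow_le_sub_mul_of_le {b B0 c G α : ℝ} (hb : 0 < b) (hbB0 : b ≤ B0) (hα : 0 ≤ α)
    (hc : 0 ≤ c) (hG : c * B0 < G) (hsq : B0 ^ (2 * α) ≤ (G - c * B0) ^ 2) :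
    b ^ α ≤ G - c * b := by
  have h : B0 ^ α ≤ G - c * B0 := by
    rw [mul_comm, rpow_mul (hb.le.trans hbB0), rpow_two] at hsq
    exact le_of_sq_le_sq hsq (by linarith)
  calc b ^ α ≤ B0 ^ α := by gcongr
    _ ≤ G - c * B0 := h
    _ ≤ G - c * b := by gcongr

lemma two_mul_div_exp_le_mul_phiD_div {l d AT A B ξ : ℝ} (hl : 0 ≤ l) (hd : 0 ≤ d)
    (hAT : 0 ≤ AT) (hA : AT ≤ A) (hB : 0 < B) (hB1 : B ≤ 1) (hξ₀ : 0 ≤ ξ) (hξ₁ : ξ < 1) :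
    2 * l * AT / exp d ≤ A * phiD l d ξ / B := by
  have hφ := two_mul_exp_neg_le_phiD hl hd hξ₀ hξ₁
  calc 2 * l * AT / exp d = AT * (2 * l * exp (-d)) := by rw [exp_neg]; ring
    _ ≤ A * phiD l d ξ := mul_le_mul hA hφ (by positivity) (hAT.trans hA)
    _ ≤ A * phiD l d ξ / B :=
      le_div_self (mul_nonneg (hAT.trans hA) ((by positivity : (0 : ℝ) ≤ _).trans hφ)) hB hB1

lemma mul_rpow_le_mul_phi_sub {l d AT A B ξ s c α : ℝ} (hl : 0 ≤ l) (hd : 0 < d)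
    (hAT : 0 ≤ AT) (hA : AT ≤ A) (hξ₀ : 0 ≤ ξ) (hξ₁ : ξ < 1) (hs : ξ * B = s)
    (hBα : B ^ α ≤ 2 * l * AT / exp d - c * B) : ξ * B ^ α ≤ A * phi l d ξ - c * s := by
  have hφ := le_phi hl hd hξ₁
  calc ξ * B ^ α ≤ ξ * (2 * l * AT / exp d - c * B) := by gcongr
    _ = AT * (2 * l / exp d * ξ) - c * s := by rw [← hs]; ring
    _ ≤ A * phi l d ξ - c * s := by
      gcongr ?_ - c * s
      exact mul_le_mul hA hφ (by positivity) (hAT.trans hA)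

lemma Pop_Af_mul_phi_nonpos {n : ℕ} {R χ p q m l K d B' t s : ℝ} {B : ℝ → ℝ}
    (hn : 0 < n) (hR : 0 < R) (hχ : 0 ≤ χ) (hq : 1 ≤ q) (hm : 0 < m)
    (hl : l ∈ Icc (1 / 3 : ℝ) 1) (hK : 0 < K) (hKb : bL l * R ^ n ≤ K ^ 2) (hd : 0 < d)
    (hB : HasDerivAt B B' t) (hBt : 0 < B t) (hBt1 : B t ≤ 1)
    (hsmall : 2 * (aL l + bL l) * √(B t) ≤ K)
    (hBα : B t ^ (1 - 1 / (n : ℝ)) ≤ 2 * l * AT m (omegaN n) l R K n / exp d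
      - m * n / (omegaN n * R ^ n) / n * B t)
    (hB'₀ : B' ≤ 0)
    (hB' : -B' ≤ (n : ℝ) ^ q * χ / √2
        * (2 * l * AT m (omegaN n) l R K n / exp d) ^ (q - 1) * B t ^ (1 - 1 / (n : ℝ)))
    (hs₀ : 0 < s) (hsB : s < B t) :
    Pop n χ p q (m * n / (omegaN n * R ^ n))
      (fun σ τ => Af m (omegaN n) l R K n B τ * phi l d (σ / B τ)) s t ≤ 0 := by
  set ξ := s / B t
  have hω := omegaN_pos hn
  have hl₀ : 0 < l := by linarith [hl.1]
  have hξ₀ : 0 < ξ := div_pos hs₀ hBt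
  have hξ₁ : ξ < 1 := (div_lt_one hBt).2 hsB
  have hsξ : ξ * B t = s := div_mul_cancel₀ _ hBt.ne'
  have hN := Nf_pos (n := n) hl hR hK hBt hsmall
  have hAT := AT_pos (R := R) (K := K) (n := n) hl₀ hm hω hR
  have hA := AT_le_Af hl hm hω hR hK hKb hBt hsmall
  have hGP := two_mul_div_exp_le_mul_phiD_div hl₀.le hd.le hAT.le hA hBt hBt1 hξ₀.le hξ₁
  have hY := mul_rpow_le_mul_phi_sub hl₀.le hd hAT.le hA hξ₀.le hξ₁ hsξ hBα
  have hchemo := mul_le_div_sqrt_one_add (k := n ^ q * χ) (by positivity) (by positivity) hGP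
    hq hξ₀ hξ₁.le hBt (by linarith [(by positivity : (0 : ℝ) ≤ 1 / n)]) hsξ hY hB'
  have hgrowth : dAfdB m (omegaN n) l R K n B t * B' * phi l d ξ ≤ 0 :=
    mul_nonpos_of_nonpos_of_nonneg
      (mul_nonpos_of_nonneg_of_nonpos (dAfdB_nonneg hl hm hω hKb hBt hsmall) hB'₀)
      ((by positivity : (0 : ℝ) ≤ _).trans (le_phi hl₀.le hd hξ₁))
  set A := Af m (omegaN n) l R K n B t
  have hA₀ : 0 < A := Af_pos hl hm hω hR hK hBt hsmall
  have := phiD_pos (d := d) hl₀ hξ₁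
  have := phiDD_pos hl₀ hd hξ₁
  simp only [Pop]
  rw [(hasDerivAt_Af_mul_phi hd.ne' hB hsB hBt hN.ne').deriv, deriv_mul_phi_div hd.ne' hBt hsB,
    deriv_deriv_mul_phi_div hd.ne' hBt hsB, show 2 / (n : ℝ) - 2 = -2 * (1 - 1 / n) by ring]
  set P := A * phiD l d ξ / B t
  set P₂ := A * phiDD l d ξ / B t ^ 2
  have hdiff : 0 ≤ (n : ℝ) ^ (p + 1) * (s ^ (2 - 2 / (n : ℝ)) * P ^ p * P₂)
      / √(P ^ 2 + (n : ℝ) ^ 2 * s ^ (2 - 2 / (n : ℝ)) * P₂ ^ 2) := by positivity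
  linarith

theorem stmt12_general (n : ℕ) (hn : 2 ≤ n) (R χ p q m l K T d B0 : ℝ) (hR : 0 < R) (hχ : 0 < χ)
    (hq : 1 ≤ q) (hm : 0 < m)
    (hl : l ∈ Set.Icc (1/3 : ℝ) 1) (hK : 0 < K) (hKb : Real.sqrt (bL l * R ^ n) ≤ K)
    (hd : d ∈ Set.Ioo (1 : ℝ) 2)
    (hB0 : B0 ∈ Set.Ioo (0 : ℝ) 1)
    (hB0le : B0 ≤ K ^ 2 / (4 * (aL l + bL l) ^ 2))
    (hB0small : B0 < 2 * l * (n : ℝ) * AT m (omegaN n) l R K n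
        / (Real.exp d * ((m * n) / (omegaN n * R ^ n))))
    (hB0sq : B0 ^ (2 - 2 / (n : ℝ))
        ≤ (2 * l * AT m (omegaN n) l R K n / Real.exp d
            - (((m * n) / (omegaN n * R ^ n)) / (n : ℝ)) * B0) ^ 2)
    (B B' : ℝ → ℝ)
    (hB : ∀ t ∈ Set.Ico (0 : ℝ) T, HasDerivAt B (B' t) t)
    (hBpos : ∀ t ∈ Set.Ico (0 : ℝ) T, 0 < B t)
    (hBanti : AntitoneOn B (Set.Ico 0 T))
    (hBinit : B 0 ≤ B0)
    (hB' : ∀ t ∈ Set.Ioo (0 : ℝ) T,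
      B' t ≥ -((n : ℝ) ^ q * χ / Real.sqrt 2)
        * (2 * l * AT m (omegaN n) l R K n / Real.exp d) ^ (q - 1)
        * (B t) ^ (1 - 1 / (n : ℝ))) :
    ∀ t ∈ Set.Ioo (0 : ℝ) T, ∀ s ∈ Set.Ioo (0 : ℝ) (B t),
      Pop n χ p q ((m * n) / (omegaN n * R ^ n))
        (fun σ τ => Af m (omegaN n) l R K n B τ * phi l d (σ / B τ)) s t ≤ 0 := by
  intro t ⟨ht₀, htT⟩ s ⟨hs₀, hsB⟩
  have hn₀ : 0 < n := by omega
  have ht : t ∈ Ico 0 T := ⟨ht₀.le, htT⟩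
  have hBt := hBpos t ht
  have hBtB0 : B t ≤ B0 := (hBanti ⟨le_rfl, ht₀.trans htT⟩ ht ht₀.le).trans hBinit
  set μ := m * n / (omegaN n * R ^ n)
  set G := 2 * l * AT m (omegaN n) l R K n / exp d
  have hμG : μ / n * B0 < G := by
    have := (lt_div_iff₀ (by positivity [omegaN_pos hn₀])).1 hB0small
    rw [lt_div_iff₀ (exp_pos d), div_mul_eq_mul_div, div_mul_eq_mul_div,
      div_lt_iff₀ (by positivity)]
    linarith
  have hBα : B t ^ (1 - 1 / (n : ℝ)) ≤ G - μ / n * B t :=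
    rpow_le_sub_mul_of_le hBt hBtB0
      (by rw [sub_nonneg, div_le_one (by positivity)]; exact_mod_cast hn₀)
      (by positivity [omegaN_pos hn₀]) hμG
      (by rwa [show 2 * (1 - 1 / (n : ℝ)) = 2 - 2 / n by ring])
  exact Pop_Af_mul_phi_nonpos hn₀ hR hχ.le hq hm hl hK ((sqrt_le_left hK.le).1 hKb)
    (by linarith [hd.1]) (hB t ht) hBt (hBtB0.trans hB0.2.le)
    (two_mul_aL_add_bL_mul_sqrt_le (by linarith [hl.1]) hK (hBtB0.trans hB0le)) hBα
    ((hB t ht).nonpos_of_antitoneOn_of_mem_nhds hBanti (Ico_mem_nhds ht₀ htT))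
    (by linarith [hB' t ⟨ht₀, htT⟩]) hs₀ hsB

/-- Very inner region, `n ≥ 2`: under the stated conditions on `B`,
`(𝒫 w_in)(s,t) ≤ 0` for all `t ∈ (0,T)` and `s ∈ (0,B(t))`. -/
theorem stmt12 (n : ℕ) (hn : 2 ≤ n) (R χ p q m l K T d B0 : ℝ) (hR : 0 < R) (hχ : 0 < χ)
    (hp : 1 ≤ p) (hq : 1 ≤ q) (hpq : p ≤ q) (hm : 0 < m)
    (hl : l ∈ Set.Icc (1/3 : ℝ) 1) (hK : 0 < K) (hKb : Real.sqrt (bL l * R ^ n) ≤ K)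
    (hT : 0 < T)
    (hd : d ∈ Set.Ioo (1 : ℝ) 2) (hde : (2 - d) * Real.exp d - 2 = 0)
    (hB0 : B0 ∈ Set.Ioo (0 : ℝ) 1) (hB0R : K * Real.sqrt B0 ≤ R ^ n)
    (hB0le : B0 ≤ K ^ 2 / (4 * (aL l + bL l) ^ 2))
    (hB0small : B0 < 2 * l * (n : ℝ) * AT m (omegaN n) l R K n
        / (Real.exp d * ((m * n) / (omegaN n * R ^ n))))
    (hB0sq : B0 ^ (2 - 2 / (n : ℝ))
        ≤ (2 * l * AT m (omegaN n) l R K n / Real.exp d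
            - (((m * n) / (omegaN n * R ^ n)) / (n : ℝ)) * B0) ^ 2)
    (B B' : ℝ → ℝ)
    (hB : ∀ t ∈ Set.Ico (0 : ℝ) T, HasDerivAt B (B' t) t)
    (hB'c : ContinuousOn B' (Set.Ico 0 T))
    (hBpos : ∀ t ∈ Set.Ico (0 : ℝ) T, 0 < B t)
    (hBanti : AntitoneOn B (Set.Ico 0 T))
    (hBinit : B 0 ≤ B0)
    (hB' : ∀ t ∈ Set.Ioo (0 : ℝ) T,
      B' t ≥ -((n : ℝ) ^ q * χ / Real.sqrt 2)
        * (2 * l * AT m (omegaN n) l R K n / Real.exp d) ^ (q - 1)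
        * (B t) ^ (1 - 1 / (n : ℝ))) :
    ∀ t ∈ Set.Ioo (0 : ℝ) T, ∀ s ∈ Set.Ioo (0 : ℝ) (B t),
      Pop n χ p q ((m * n) / (omegaN n * R ^ n))
        (fun σ τ => Af m (omegaN n) l R K n B τ * phi l d (σ / B τ)) s t ≤ 0 :=
  stmt12_general n hn R χ p q m l K T d B0 hR hχ hq hm hl hK hKb hd hB0 hB0le hB0small hB0sq B B' hB
    hBpos hBanti hBinit hB'
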